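/- arXiv:1405.6307 — 5 statements merged into one kernel-verified Lean document; each statement's English description precedes it below -/
import Mathlib

section
/- Let S be a nonempty finite set, and suppose given η_j ≥ 0 and φ_j > 0 for each j ∈ S, and δ : S → ℝ with Σ_{j ∈ S} δ_j = 0. Let 1 ∈ S be an index such that δ_1 φ_1 ≤ δ_j φ_j for all j ∈ S and δ_1 φ_1 < 0. Then Σ_{j ∈ S} η_j (1 + δ_j φ_j/(−δ_1 φ_1)) ≤ (max_{j ∈ S} η_j φ_j) · Σ_{j ∈ S} 1/φ_j. -/
open Finset

/-- Key inequality from the proof of Lemma `f^S`-minimality: if `Σ_{j∈S} δ_j = 0`,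
`δ_1 φ_1 = min_j δ_j φ_j < 0`, `η_j ≥ 0` and `φ_j > 0`, then
`Σ_j η_j (1 + δ_j φ_j / (-δ_1 φ_1)) ≤ (max_j η_j φ_j) · Σ_j 1/φ_j`. -/
theorem stmt6 {ι : Type*} [DecidableEq ι] (S : Finset ι) (hS : S.Nonempty)
    (η φ δ : ι → ℝ) (hη : ∀ j ∈ S, 0 ≤ η j) (hφ : ∀ j ∈ S, 0 < φ j)
    (hδsum : ∑ j ∈ S, δ j = 0)
    (j₁ : ι) (hj₁ : j₁ ∈ S) (hmin : ∀ j ∈ S, δ j₁ * φ j₁ ≤ δ j * φ j)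
    (hneg : δ j₁ * φ j₁ < 0) :
    ∑ j ∈ S, η j * (1 + δ j * φ j / (-(δ j₁ * φ j₁))) ≤
      (S.sup' hS fun j => η j * φ j) * ∑ j ∈ S, (φ j)⁻¹ := by
  set M : ℝ := -(δ j₁ * φ j₁) with hMdef
  have hM : 0 < M := by simpa [hMdef] using hneg
  set c : ℝ := S.sup' hS fun j => η j * φ j with hcdef
  have hc : ∀ j ∈ S, η j * φ j ≤ c := fun j hj => le_sup' (fun j => η j * φ j) hj
  have key : ∀ j ∈ S, η j * (1 + δ j * φ j / M) ≤ c * (φ j)⁻¹ + c * δ j / M := by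
    intro j hj
    have hφj := hφ j hj
    have hx : 0 ≤ 1 + δ j * φ j / M := by
      have h1 : -M ≤ δ j * φ j := by have := hmin j hj; linarith
      have h2 : -1 ≤ δ j * φ j / M := by rw [le_div_iff₀ hM]; linarith
      linarith
    have hηle : η j ≤ c * (φ j)⁻¹ := by
      rw [← div_eq_mul_inv, le_div_iff₀ hφj]; exact hc j hj
    calc η j * (1 + δ j * φ j / M) ≤ (c * (φ j)⁻¹) * (1 + δ j * φ j / M) := by
          apply mul_le_mul_of_nonneg_right hηle hx
      _ = c * (φ j)⁻¹ + c * δ j / M := by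
          field_simp
  calc ∑ j ∈ S, η j * (1 + δ j * φ j / M)
      ≤ ∑ j ∈ S, (c * (φ j)⁻¹ + c * δ j / M) := Finset.sum_le_sum key
    _ = c * ∑ j ∈ S, (φ j)⁻¹ + (c / M) * ∑ j ∈ S, δ j := by
        rw [Finset.sum_add_distrib, Finset.mul_sum, Finset.mul_sum]
        congr 1
        exact Finset.sum_congr rfl fun x _ => by ring
    _ = c * ∑ j ∈ S, (φ j)⁻¹ := by rw [hδsum]; ring
end

section
/- Let c : ℝ → ℝ be continuous and nondecreasing, and let μ_c denote its associated Lebesgue–Stieltjes measure (so μ_c((a, b]) = c(b) − c(a)). Then for any T > 0, the pushforward under c of the restriction of μ_c to [0, T] equals Lebesgue measure restricted to the interval [c(0), c(T)]. -/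
open MeasureTheory Set

private lemma leftLim_eq_self (c : StieltjesFunction ℝ) (hc : Continuous c) (x : ℝ) :
    Function.leftLim c x = c x :=
  c.mono.continuousWithinAt_Iio_iff_leftLim_eq.1 (hc.continuousAt.continuousWithinAt)

/-- For a continuous nondecreasing (Stieltjes) function `c`, the pushforward under
`c` of the Lebesgue–Stieltjes measure `μ_c` restricted to `[0, T]` is Lebesgue
measure restricted to `[c 0, c T]`. -/
theorem stmt11 (c : StieltjesFunction ℝ) (hc : Continuous c) (T : ℝ) (hT : 0 < T) :
    Measure.map c (c.measure.restrict (Set.Icc 0 T)) =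
      volume.restrict (Set.Icc (c 0) (c T)) := by
  have hmc : Measurable c := hc.measurable
  have hfin : IsFiniteMeasure (c.measure.restrict (Set.Icc 0 T)) := by
    constructor
    rw [Measure.restrict_apply_univ, c.measure_Icc]
    exact ENNReal.ofReal_lt_top
  have hfin2 : IsFiniteMeasure (Measure.map c (c.measure.restrict (Set.Icc 0 T))) :=
    Measure.isFiniteMeasure_map _ _
  refine Measure.ext_of_Iic _ _ (fun a => ?_)
  rw [Measure.map_apply hmc measurableSet_Iic,
    Measure.restrict_apply' measurableSet_Icc, Measure.restrict_apply measurableSet_Iic]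
  rcases lt_or_ge a (c 0) with ha | ha
  · have h1 : c ⁻¹' Iic a ∩ Icc 0 T = ∅ := by
      ext x
      simp only [mem_inter_iff, mem_preimage, mem_Iic, mem_Icc, mem_empty_iff_false,
        iff_false, not_and, and_imp]
      intro hxa hx0 _
      exact absurd (le_trans (c.mono hx0) hxa) (not_le.2 ha)
    have h2 : Iic a ∩ Icc (c 0) (c T) = ∅ := by
      ext x
      simp only [mem_inter_iff, mem_Iic, mem_Icc, mem_empty_iff_false, iff_false, not_and,
        and_imp]
      intro hxa hx0
      exact absurd (le_trans hx0 hxa) (not_le.2 ha)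
    simp [h1, h2]
  · set S : Set ℝ := c ⁻¹' Iic a ∩ Icc 0 T with hS
    have hSclosed : IsClosed S := (isClosed_Iic.preimage hc).inter isClosed_Icc
    have hSne : S.Nonempty := ⟨0, ⟨ha, le_refl (0:ℝ), hT.le⟩⟩
    have hSbdd : BddAbove S := ⟨T, fun x hx => hx.2.2⟩
    set v : ℝ := sSup S with hv
    have hvS : v ∈ S := hSclosed.csSup_mem hSne hSbdd
    have hcv : c v ≤ a := hvS.1
    have hv0 : 0 ≤ v := hvS.2.1
    have hvT : v ≤ T := hvS.2.2
    have hSeq : S = Icc 0 v := by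
      apply Subset.antisymm
      · intro x hx
        exact ⟨hx.2.1, le_csSup hSbdd hx⟩
      · intro x hx
        exact ⟨le_trans (c.mono hx.2) hcv, hx.1, le_trans hx.2 hvT⟩
    have hcveq : c v = min a (c T) := by
      rcases le_or_gt (c T) a with hTa | hTa
      · have hTv : T ≤ v := le_csSup hSbdd ⟨hTa, hT.le, le_refl T⟩
        have : v = T := le_antisymm hvT hTv
        rw [this, min_eq_right hTa]
      · have hvltT : v < T := by
          rcases lt_or_eq_of_le hvT with h | h
          · exact h
          · exact absurd (h ▸ hcv) (not_le.2 hTa)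
        have hcva : a ≤ c v := by
          by_contra hlt
          push_neg at hlt
          have hopen : IsOpen {x : ℝ | c x < a} := isOpen_lt hc continuous_const
          obtain ⟨ε, hε, hball⟩ := Metric.isOpen_iff.1 hopen v hlt
          set x := min T (v + ε / 2) with hx
          have hxv : v < x := lt_min hvltT (by linarith)
          have hxball : x ∈ Metric.ball v ε := by
            rw [Metric.mem_ball, Real.dist_eq, abs_of_nonneg (by linarith)]
            have : x ≤ v + ε / 2 := min_le_right _ _
            linarith
          have hcxa : c x < a := hball hxball
          have hxS : x ∈ S := ⟨hcxa.le, le_trans hv0 hxv.le, min_le_left _ _⟩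
          exact absurd (le_csSup hSbdd hxS) (not_le.2 hxv)
        rw [le_antisymm hcv hcva, min_eq_left hTa.le]
    have hinter : Iic a ∩ Icc (c 0) (c T) = Icc (c 0) (min a (c T)) := by
      ext x
      simp only [mem_inter_iff, mem_Iic, mem_Icc, le_min_iff]
      tauto
    rw [hSeq, c.measure_Icc, leftLim_eq_self c hc, hinter, Real.volume_Icc, hcveq]
end

section
/- Let T > 0, let c : ℝ → ℝ be nondecreasing and Lipschitz with c(0) = 0 and constant outside [0, T], and let w : ℝ → ℝ be nondecreasing and Lipschitz and constant outside [0, c(T)]. Set m := w ∘ c. Then the Lebesgue–Stieltjes measure μ_m restricted to [0, T] is absolutely continuous with respect to μ_c restricted to [0, T], and for μ_c-almost every t ∈ [0, T], w is differentiable at c(t) and the Radon–Nikodym derivative satisfies (dμ_m/dμ_c)(t) = w'(c(t)). -/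
open MeasureTheory

/-- The Lebesgue–Stieltjes measure of a monotone function. -/
noncomputable def lsMeasure {f : ℝ → ℝ} (hf : Monotone f) : Measure ℝ :=
  hf.stieltjesFunction.measure

open Set Filter Topology
open scoped NNReal ENNReal

lemma leftLimEqSelf {f : ℝ → ℝ} (hfc : Continuous f) (x : ℝ) :
    Function.leftLim f x = f x :=
  leftLim_eq_of_tendsto
    ((hfc.tendsto x).mono_left nhdsWithin_le_nhds)

lemma stjCoe {f : ℝ → ℝ} (hf : Monotone f) (hfc : Continuous f) :
    ⇑hf.stieltjesFunction = f := by
  funext x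
  rw [hf.stieltjesFunction_eq]
  exact rightLim_eq_of_tendsto
    ((hfc.tendsto x).mono_left nhdsWithin_le_nhds)

lemma lsIoc {f : ℝ → ℝ} (hf : Monotone f) (hfc : Continuous f) (a b : ℝ) :
    lsMeasure hf (Set.Ioc a b) = ENNReal.ofReal (f b - f a) := by
  show hf.stieltjesFunction.measure _ = _
  rw [StieltjesFunction.measure_Ioc, stjCoe hf hfc]

lemma lsSingleton {f : ℝ → ℝ} (hf : Monotone f) (hfc : Continuous f) (a : ℝ) :
    lsMeasure hf {a} = 0 := by
  show hf.stieltjesFunction.measure _ = _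
  rw [StieltjesFunction.measure_singleton, stjCoe hf hfc, leftLimEqSelf hfc, sub_self,
    ENNReal.ofReal_zero]

/-- Let `c` be nondecreasing, Lipschitz, vanishing at `0`, and constant outside
`[0,T]`; let `w` be nondecreasing, Lipschitz, and constant outside `[0, c T]`; and
set `m := w ∘ c`.  Then `μ_m` restricted to `[0,T]` is absolutely continuous
with respect to `μ_c` restricted to `[0,T]`, and for `μ_c`-a.e. `t ∈ [0,T]`,
`w` is differentiable at `c t` and `(dμ_m/dμ_c)(t) = w'(c t)`. -/
theorem stmt12 (T : ℝ) (hT : 0 < T) (c w : ℝ → ℝ)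
    (hc : Monotone c) (Kc : NNReal) (hclip : LipschitzWith Kc c)
    (hc0 : c 0 = 0) (hcleft : ∀ t : ℝ, t ≤ 0 → c t = c 0)
    (hcright : ∀ t : ℝ, T ≤ t → c t = c T)
    (hw : Monotone w) (Kw : NNReal) (hwlip : LipschitzWith Kw w)
    (hwleft : ∀ z : ℝ, z ≤ 0 → w z = w 0)
    (hwright : ∀ z : ℝ, c T ≤ z → w z = w (c T)) :
    (lsMeasure (hw.comp hc)).restrict (Set.Icc 0 T) ≪
      (lsMeasure hc).restrict (Set.Icc 0 T) ∧
    ∀ᵐ t ∂((lsMeasure hc).restrict (Set.Icc 0 T)),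
      DifferentiableAt ℝ w (c t) ∧
      ((lsMeasure (hw.comp hc)).restrict (Set.Icc 0 T)).rnDeriv
          ((lsMeasure hc).restrict (Set.Icc 0 T)) t =
        ENNReal.ofReal (deriv w (c t)) := by
  have hcc : Continuous c := hclip.continuous
  have hwc : Continuous w := hwlip.continuous
  have hmc : Continuous (w ∘ c) := hwc.comp hcc
  have hcm : Measurable c := hcc.measurable
  have hcoe_c : ⇑hc.stieltjesFunction = c := stjCoe hc hcc
  have hcoe_w : ⇑hw.stieltjesFunction = w := stjCoe hw hwc
  have hcoe_m : ⇑(hw.comp hc).stieltjesFunction = w ∘ c := stjCoe (hw.comp hc) hmc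
  -- nonnegativity and upper bound for c
  have hc_nonneg : ∀ t, 0 ≤ c t := by
    intro t
    rcases le_total t 0 with h | h
    · rw [hcleft t h, hc0]
    · rw [← hc0]; exact hc h
  have hc_le : ∀ t, c t ≤ c T := by
    intro t
    rcases le_total t T with h | h
    · exact hc h
    · rw [hcright t h]
  have hcT_nonneg : 0 ≤ c T := hc_nonneg T
  -- tendsto facts
  have hcbot : Tendsto c atBot (𝓝 0) := by
    refine Tendsto.congr' ?_ (tendsto_const_nhds (α := ℝ) (f := atBot))
    filter_upwards [eventually_le_atBot (0 : ℝ)] with t ht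
    rw [hcleft t ht, hc0]
  have hctop : Tendsto c atTop (𝓝 (c T)) := by
    refine Tendsto.congr' ?_ (tendsto_const_nhds (α := ℝ) (f := atTop))
    filter_upwards [eventually_ge_atTop T] with t ht
    rw [hcright t ht]
  have hcbot' : Tendsto (⇑hc.stieltjesFunction) atBot (𝓝 0) := by rw [hcoe_c]; exact hcbot
  have hctop' : Tendsto (⇑hc.stieltjesFunction) atTop (𝓝 (c T)) := by rw [hcoe_c]; exact hctop
  have hmbot : Tendsto (⇑(hw.comp hc).stieltjesFunction) atBot (𝓝 (w 0)) := by
    rw [hcoe_m]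
    refine Tendsto.congr' ?_ (tendsto_const_nhds (α := ℝ) (f := atBot))
    filter_upwards [eventually_le_atBot (0 : ℝ)] with t ht
    simp only [Function.comp_apply, hcleft t ht, hc0]
  have hmtop : Tendsto (⇑(hw.comp hc).stieltjesFunction) atTop (𝓝 (w (c T))) := by
    rw [hcoe_m]
    refine Tendsto.congr' ?_ (tendsto_const_nhds (α := ℝ) (f := atTop))
    filter_upwards [eventually_ge_atTop T] with t ht
    simp only [Function.comp_apply, hcright t ht]
  haveI : IsFiniteMeasure (lsMeasure hc) := hc.stieltjesFunction.isFiniteMeasure hcbot' hctop'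
  haveI : IsFiniteMeasure (lsMeasure (hw.comp hc)) :=
    (hw.comp hc).stieltjesFunction.isFiniteMeasure hmbot hmtop
  -- level sets of c are null for μ_c
  have levelNull : ∀ a : ℝ, lsMeasure hc {t | a < t ∧ c t = c a} = 0 := by
    intro a
    set S := {t | a < t ∧ c t = c a} with hS
    rcases S.eq_empty_or_nonempty with h | h
    · rw [h]; exact measure_empty
    by_cases hbdd : BddAbove S
    · set s := sSup S with hs
      have hsub : S ⊆ {t | c t ≤ c a} := fun t ht => le_of_eq ht.2
      have hcl : IsClosed {t | c t ≤ c a} := isClosed_le hcc continuous_const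
      have hscl : s ∈ {t | c t ≤ c a} :=
        hcl.closure_subset ((closure_mono hsub) (csSup_mem_closure h hbdd))
      have hgecs : c a ≤ c s := by
        obtain ⟨t, ht⟩ := h
        calc c a = c t := ht.2.symm
        _ ≤ c s := hc (le_csSup hbdd ht)
      have hcs : c s = c a := le_antisymm hscl hgecs
      have : S ⊆ Ioc a s := fun t ht => ⟨ht.1, le_csSup hbdd ht⟩
      refine le_antisymm ?_ zero_le
      calc lsMeasure hc S ≤ lsMeasure hc (Ioc a s) := measure_mono this
      _ = ENNReal.ofReal (c s - c a) := lsIoc hc hcc a s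
      _ = 0 := by rw [hcs, sub_self, ENNReal.ofReal_zero]
    · -- unbounded: c a = c T
      have : ∃ t ∈ S, T ≤ t := by
        by_contra hcon
        push_neg at hcon
        exact hbdd ⟨T, fun t ht => (hcon t ht).le⟩
      obtain ⟨t, htS, htT⟩ := this
      have hceq : c a = c T := by rw [← htS.2, hcright t htT]
      have h1 : S ⊆ Ici a := fun t ht => ht.1.le
      refine le_antisymm ?_ zero_le
      calc lsMeasure hc S ≤ lsMeasure hc (Ici a) := measure_mono h1
      _ = ENNReal.ofReal (c T - Function.leftLim c a) := by
            show hc.stieltjesFunction.measure _ = _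
            rw [hc.stieltjesFunction.measure_Ici hctop', hcoe_c]
      _ = 0 := by rw [leftLimEqSelf hcc, ← hceq, sub_self, ENNReal.ofReal_zero]
  -- degenerate case
  by_cases hdeg : c T = 0
  · have hzero : ∀ t, c t = 0 := fun t => le_antisymm (hdeg ▸ hc_le t) (hc_nonneg t)
    have hμc : lsMeasure hc = 0 := by
      refine Measure.ext_of_Ioc _ _ (fun a b _ => ?_)
      rw [lsIoc hc hcc]
      simp [hzero]
    have hμm : lsMeasure (hw.comp hc) = 0 := by
      refine Measure.ext_of_Ioc _ _ (fun a b _ => ?_)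
      rw [lsIoc (hw.comp hc) hmc]
      simp [Function.comp, hzero]
    rw [hμc, hμm, Measure.restrict_zero]
    refine ⟨Measure.AbsolutelyContinuous.mk (fun s _ h => h), ?_⟩
    simp
  have hcT_pos : 0 < c T := lt_of_le_of_ne hcT_nonneg (Ne.symm hdeg)
  -- sublevel sets
  have sublevel : ∀ x : ℝ, 0 ≤ x → x < c T → ∃ s : ℝ, c s = x ∧ {t | c t ≤ x} = Iic s := by
    intro x hx0 hxT
    set S := {t | c t ≤ x} with hSdef
    have hcl : IsClosed S := isClosed_le hcc continuous_const
    have hne : S.Nonempty := ⟨0, by simp [hSdef, hc0, hx0]⟩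
    have hbdd : BddAbove S := by
      refine ⟨T, fun t ht => ?_⟩
      by_contra hcon
      push_neg at hcon
      have : c T ≤ x := le_trans (le_of_eq (hcright t hcon.le).symm) ht
      exact absurd this (not_le.2 hxT)
    set s := sSup S with hs
    have hsS : s ∈ S := hcl.csSup_mem hne hbdd
    have hlex : c s ≤ x := hsS
    have hgex : x ≤ c s := by
      have hxmem : x ∈ Icc (c 0) (c T) := by rw [hc0]; exact ⟨hx0, hxT.le⟩
      obtain ⟨t₀, ht₀mem, ht₀⟩ := intermediate_value_Icc hT.le hcc.continuousOn hxmem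
      have : t₀ ∈ S := le_of_eq ht₀
      rw [← ht₀]
      exact hc (le_csSup hbdd this)
    refine ⟨s, le_antisymm hlex hgex, ?_⟩
    ext t
    constructor
    · intro ht; exact le_csSup hbdd ht
    · intro ht
      exact le_trans (hc ht) hlex
  -- the pushforward of μ_c under c agrees with volume on Ioc 0 (c T)
  haveI hfinmap : IsFiniteMeasure (Measure.map c (lsMeasure hc)) := by
    constructor
    rw [Measure.map_apply hcm MeasurableSet.univ]
    exact measure_lt_top _ _
  have mapIoc : ∀ x y : ℝ, 0 ≤ x → y ≤ c T →
      Measure.map c (lsMeasure hc) (Ioc x y) = ENNReal.ofReal (y - x) := by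
    intro x y hx0 hyT
    rw [Measure.map_apply hcm measurableSet_Ioc]
    rcases le_or_gt y x with hyx | hxy
    · have : c ⁻¹' Ioc x y = ∅ := by
        ext t
        simp only [mem_preimage, mem_Ioc, mem_empty_iff_false, iff_false, not_and, not_le]
        intro h
        exact lt_of_le_of_lt hyx h
      rw [this, measure_empty, eq_comm, ENNReal.ofReal_eq_zero]
      linarith
    · have hxT : x < c T := lt_of_lt_of_le hxy hyT
      obtain ⟨s, hcs, hSx⟩ := sublevel x hx0 hxT
      rcases eq_or_lt_of_le hyT with hyeq | hylt
      · -- y = c T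
        have : c ⁻¹' Ioc x y = Ioi s := by
          ext t
          simp only [mem_preimage, mem_Ioc, mem_Ioi]
          constructor
          · intro ⟨h1, _⟩
            by_contra hcon
            push_neg at hcon
            have : t ∈ Iic s := hcon
            rw [← hSx] at this
            exact absurd h1 (not_lt.2 this)
          · intro hst
            refine ⟨?_, hyeq ▸ hc_le t⟩
            by_contra hcon
            push_neg at hcon
            have : t ∈ Iic s := by rw [← hSx]; exact hcon
            exact absurd hst (not_lt.2 this)
        rw [this]
        have haeq : Ioi s =ᵐ[lsMeasure hc] Ici s := by
          rw [MeasureTheory.ae_eq_set]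
          constructor
          · rw [show Ioi s \ Ici s = ∅ by ext t; simp (config := {contextual := true}) [le_of_lt]]
            exact measure_empty
          · refine measure_mono_null (fun t ht => ?_) (lsSingleton hc hcc s)
            have : t = s := le_antisymm (not_lt.1 ht.2) ht.1
            simp [this]
        rw [measure_congr haeq]
        have : lsMeasure hc (Ici s) = ENNReal.ofReal (c T - Function.leftLim c s) := by
          show hc.stieltjesFunction.measure _ = _
          rw [hc.stieltjesFunction.measure_Ici hctop', hcoe_c]
        rw [this, leftLimEqSelf hcc, hcs, hyeq]
      · -- y < c T
        obtain ⟨s', hcs', hSy⟩ := sublevel y (le_trans hx0 hxy.le) hylt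
        have : c ⁻¹' Ioc x y = Ioc s s' := by
          ext t
          simp only [mem_preimage, mem_Ioc]
          constructor
          · intro ⟨h1, h2⟩
            constructor
            · by_contra hcon
              push_neg at hcon
              have : t ∈ Iic s := hcon
              rw [← hSx] at this
              exact absurd h1 (not_lt.2 this)
            · have : t ∈ {t | c t ≤ y} := h2
              rwa [hSy] at this
          · intro ⟨h1, h2⟩
            constructor
            · by_contra hcon
              push_neg at hcon
              have : t ∈ {t | c t ≤ x} := hcon
              rw [hSx] at this
              exact absurd h1 (not_lt.2 this)
            · have : t ∈ Iic s' := h2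
              rw [← hSy] at this
              exact this
        rw [this, lsIoc hc hcc, hcs, hcs']
  have claimM : (Measure.map c (lsMeasure hc)).restrict (Ioc 0 (c T)) =
      volume.restrict (Ioc 0 (c T)) := by
    refine Measure.ext_of_Ioc _ _ (fun x y _ => ?_)
    rw [Measure.restrict_apply measurableSet_Ioc, Measure.restrict_apply measurableSet_Ioc,
      Ioc_inter_Ioc, Real.volume_Ioc]
    exact mapIoc _ _ le_sup_right inf_le_right
  -- mass of the pushforward outside Ioc 0 (c T) is zero
  have hout : Measure.map c (lsMeasure hc) (Ioc 0 (c T))ᶜ = 0 := by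
    rw [Measure.map_apply hcm measurableSet_Ioc.compl]
    have hsub : c ⁻¹' (Ioc 0 (c T))ᶜ ⊆ {t | c t ≤ 0} := by
      intro t ht
      simp only [mem_preimage, mem_compl_iff, mem_Ioc, not_and, not_le] at ht
      by_contra hcon
      simp only [mem_setOf_eq, not_le] at hcon
      exact absurd (hc_le t) (not_le.2 (ht hcon))
    obtain ⟨s₀, hcs₀, hS₀⟩ := sublevel 0 le_rfl hcT_pos
    refine measure_mono_null (hS₀ ▸ hsub) ?_
    have : lsMeasure hc (Iic s₀) = ENNReal.ofReal (c s₀ - 0) := by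
      show hc.stieltjesFunction.measure _ = _
      rw [hc.stieltjesFunction.measure_Iic hcbot', hcoe_c]
    rw [this, hcs₀, sub_self, ENNReal.ofReal_zero]
  have mapNull : ∀ N : Set ℝ, MeasurableSet N → volume N = 0 →
      Measure.map c (lsMeasure hc) N = 0 := by
    intro N hNm hN0
    have h1 : Measure.map c (lsMeasure hc) (N ∩ Ioc 0 (c T)) = 0 := by
      have := Measure.restrict_apply (μ := Measure.map c (lsMeasure hc))
        (s := Ioc 0 (c T)) hNm
      rw [← this, claimM, Measure.restrict_apply hNm]
      exact measure_mono_null inter_subset_left hN0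
    refine le_antisymm ?_ zero_le
    calc Measure.map c (lsMeasure hc) N
        ≤ Measure.map c (lsMeasure hc) ((N ∩ Ioc 0 (c T)) ∪ (Ioc 0 (c T))ᶜ) := by
          refine measure_mono (fun z hz => ?_)
          by_cases hzI : z ∈ Ioc 0 (c T)
          · exact Or.inl ⟨hz, hzI⟩
          · exact Or.inr hzI
      _ ≤ Measure.map c (lsMeasure hc) (N ∩ Ioc 0 (c T)) +
            Measure.map c (lsMeasure hc) (Ioc 0 (c T))ᶜ := measure_union_le _ _
      _ = 0 := by rw [h1, hout, add_zero]
  have hwbot' : Tendsto (⇑hw.stieltjesFunction) atBot (𝓝 (w 0)) := by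
    rw [hcoe_w]
    refine Tendsto.congr' ?_ (tendsto_const_nhds (α := ℝ) (f := atBot))
    filter_upwards [eventually_le_atBot (0 : ℝ)] with z hz
    rw [hwleft z hz]
  have hwtop' : Tendsto (⇑hw.stieltjesFunction) atTop (𝓝 (w (c T))) := by
    rw [hcoe_w]
    refine Tendsto.congr' ?_ (tendsto_const_nhds (α := ℝ) (f := atTop))
    filter_upwards [eventually_ge_atTop (c T)] with z hz
    rw [hwright z hz]
  haveI : IsFiniteMeasure (lsMeasure hw) := hw.stieltjesFunction.isFiniteMeasure hwbot' hwtop'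
  -- μ_w is absolutely continuous wrt volume
  have hwac : lsMeasure hw ≪ volume := by
    have hu : Monotone (fun z => (Kw : ℝ) * z - w z) := by
      intro a b hab
      have h2 := hwlip.dist_le_mul a b
      rw [Real.dist_eq, Real.dist_eq, abs_sub_comm (w a), abs_sub_comm a] at h2
      have h1 : w b - w a ≤ (Kw : ℝ) * (b - a) := by
        calc w b - w a ≤ |w b - w a| := le_abs_self _
        _ ≤ (Kw : ℝ) * |b - a| := h2
        _ = (Kw : ℝ) * (b - a) := by rw [abs_of_nonneg (by linarith : (0:ℝ) ≤ b - a)]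
      dsimp only
      linarith
    have huc : Continuous (fun z => (Kw : ℝ) * z - w z) :=
      (continuous_const.mul continuous_id).sub hwc
    have hsum : hu.stieltjesFunction + hw.stieltjesFunction = Kw • StieltjesFunction.id := by
      refine StieltjesFunction.ext (fun x => ?_)
      rw [StieltjesFunction.add_apply]
      have h1 : hu.stieltjesFunction x = (Kw : ℝ) * x - w x := by
        rw [stjCoe hu huc]
      have h2 : hw.stieltjesFunction x = w x := by rw [hcoe_w]
      have h3 : (Kw • StieltjesFunction.id) x = (Kw : ℝ) * x := rfl
      rw [h1, h2, h3]
      ring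
    have hmeas : hu.stieltjesFunction.measure + hw.stieltjesFunction.measure
        = (Kw : ℝ≥0) • (volume : Measure ℝ) := by
      rw [← StieltjesFunction.measure_add, hsum, StieltjesFunction.measure_smul,
        Real.volume_eq_stieltjes_id]
    refine Measure.AbsolutelyContinuous.mk (fun s _ hs => ?_)
    have h1 : lsMeasure hw s ≤ (hu.stieltjesFunction.measure + hw.stieltjesFunction.measure) s := by
      rw [Measure.add_apply]
      exact le_add_self
    rw [hmeas, Measure.smul_apply, hs, smul_zero] at h1
    exact le_antisymm h1 zero_le
  -- the density
  set g : ℝ → ℝ≥0∞ := (lsMeasure hw).rnDeriv volume with hg_def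
  have hgm : Measurable g := Measure.measurable_rnDeriv _ _
  have hwd : lsMeasure hw = volume.withDensity g :=
    (Measure.withDensity_rnDeriv_eq _ _ hwac).symm
  have hgcm : Measurable (fun t => g (c t)) := hgm.comp hcm
  -- the core change-of-variables identity
  have coreL : ∀ a b : ℝ, 0 ≤ a → a ≤ b → b ≤ T →
      ∫⁻ t in Ioc a b, g (c t) ∂(lsMeasure hc)
        = ENNReal.ofReal (w (c b) - w (c a)) := by
    intro a b ha0 hab hbT
    have hae : Ioc a b =ᵐ[lsMeasure hc] c ⁻¹' Ioc (c a) (c b) := by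
      rw [MeasureTheory.ae_eq_set]
      constructor
      · refine measure_mono_null (fun t ht => ?_) (levelNull a)
        obtain ⟨⟨h1, h2⟩, h3⟩ := ht
        simp only [mem_preimage, mem_Ioc, not_and, not_le] at h3
        refine ⟨h1, ?_⟩
        by_contra hcon
        have hca : c a < c t := lt_of_le_of_ne (hc h1.le) (Ne.symm hcon)
        exact absurd (hc h2) (not_le.2 (h3 hca))
      · refine measure_mono_null (fun t ht => ?_) (levelNull b)
        obtain ⟨h1, h2⟩ := ht
        simp only [mem_preimage, mem_Ioc] at h1
        simp only [mem_Ioc, not_and, not_le] at h2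
        have hta : a < t := by
          by_contra hcon
          push_neg at hcon
          exact absurd (hc hcon) (not_le.2 h1.1)
        have htb : b < t := h2 hta
        exact ⟨htb, le_antisymm h1.2 (hc htb.le)⟩
    rw [setLIntegral_congr hae, ← setLIntegral_map measurableSet_Ioc hgm hcm]
    have hsub : Ioc (c a) (c b) ⊆ Ioc 0 (c T) :=
      Ioc_subset_Ioc (hc_nonneg a) (hc_le b)
    have hres : (Measure.map c (lsMeasure hc)).restrict (Ioc (c a) (c b))
        = volume.restrict (Ioc (c a) (c b)) := by
      have e1 : (Measure.map c (lsMeasure hc)).restrict (Ioc (c a) (c b))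
          = ((Measure.map c (lsMeasure hc)).restrict (Ioc 0 (c T))).restrict
              (Ioc (c a) (c b)) := by
        rw [Measure.restrict_restrict measurableSet_Ioc, inter_eq_self_of_subset_left hsub]
      have e2 : (volume : Measure ℝ).restrict (Ioc (c a) (c b))
          = ((volume : Measure ℝ).restrict (Ioc 0 (c T))).restrict (Ioc (c a) (c b)) := by
        rw [Measure.restrict_restrict measurableSet_Ioc, inter_eq_self_of_subset_left hsub]
      rw [e1, claimM, ← e2]
    have : ∫⁻ z in Ioc (c a) (c b), g z ∂(Measure.map c (lsMeasure hc))
        = ∫⁻ z in Ioc (c a) (c b), g z ∂(volume : Measure ℝ) := by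
      rw [show (∫⁻ z in Ioc (c a) (c b), g z ∂(Measure.map c (lsMeasure hc)))
          = ∫⁻ z, g z ∂((Measure.map c (lsMeasure hc)).restrict (Ioc (c a) (c b))) from rfl,
        hres]
    rw [this, ← withDensity_apply g measurableSet_Ioc, ← hwd, lsIoc hw hwc]
  -- the key identity for restricted measures on Ioc 0 T
  have key : (lsMeasure (hw.comp hc)).restrict (Ioc 0 T)
      = ((lsMeasure hc).restrict (Ioc 0 T)).withDensity (fun t => g (c t)) := by
    refine Measure.ext_of_Ioc _ _ (fun a b _ => ?_)
    rw [Measure.restrict_apply measurableSet_Ioc,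
      withDensity_apply _ measurableSet_Ioc, Measure.restrict_restrict measurableSet_Ioc,
      Ioc_inter_Ioc]
    rcases le_or_gt (a ⊔ 0) (b ⊓ T) with hord | hord
    · rw [lsIoc (hw.comp hc) hmc, coreL _ _ le_sup_right hord inf_le_right]
      rfl
    · rw [Ioc_eq_empty (not_lt.2 hord.le), measure_empty, Measure.restrict_empty,
        lintegral_zero_measure]
  -- transfer from Ioc to Icc restrictions
  have hIccIoc : ∀ (ν : Measure ℝ), ν {(0 : ℝ)} = 0 →
      ν.restrict (Icc 0 T) = ν.restrict (Ioc 0 T) := by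
    intro ν hν0
    refine Measure.restrict_congr_set ?_
    rw [MeasureTheory.ae_eq_set]
    constructor
    · refine measure_mono_null (fun t ht => ?_) hν0
      obtain ⟨⟨h1, h2⟩, h3⟩ := ht
      have ht0 : t ≤ 0 := by
        by_contra hcon
        push_neg at hcon
        exact h3 (mem_Ioc.2 ⟨hcon, h2⟩)
      simp [le_antisymm ht0 h1]
    · rw [show Ioc 0 T \ Icc 0 T = ∅ by
        ext t; simp (config := {contextual := true}) [le_of_lt, mem_Ioc, mem_Icc]]
      exact measure_empty
  have hIc : (lsMeasure hc).restrict (Icc 0 T) = (lsMeasure hc).restrict (Ioc 0 T) :=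
    hIccIoc _ (lsSingleton hc hcc 0)
  have hIm : (lsMeasure (hw.comp hc)).restrict (Icc 0 T)
      = (lsMeasure (hw.comp hc)).restrict (Ioc 0 T) :=
    hIccIoc _ (lsSingleton (hw.comp hc) hmc 0)
  have key' : (lsMeasure (hw.comp hc)).restrict (Icc 0 T)
      = ((lsMeasure hc).restrict (Icc 0 T)).withDensity (fun t => g (c t)) := by
    rw [hIm, hIc, key]
  constructor
  · rw [key']
    exact withDensity_absolutelyContinuous _ _
  · -- a.e. statement
    have hrn : ((lsMeasure (hw.comp hc)).restrict (Icc 0 T)).rnDeriv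
          ((lsMeasure hc).restrict (Icc 0 T))
        =ᵐ[(lsMeasure hc).restrict (Icc 0 T)] (fun t => g (c t)) := by
      rw [key']
      exact Measure.rnDeriv_withDensity _ hgcm
    have hA : ∀ᵐ x ∂(volume : Measure ℝ),
        HasDerivAt w (g x).toReal x ∧ g x ≠ ∞ := by
      have h1 : ∀ᵐ x ∂(volume : Measure ℝ), HasDerivAt w (g x).toReal x := hw.ae_hasDerivAt
      have h2 : ∀ᵐ x ∂(volume : Measure ℝ), g x ≠ ∞ := by
        filter_upwards [Measure.rnDeriv_lt_top (lsMeasure hw) volume] with x hx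
        exact hx.ne
      filter_upwards [h1, h2] with x hx1 hx2 using ⟨hx1, hx2⟩
    have hpull : ∀ᵐ t ∂((lsMeasure hc).restrict (Icc 0 T)),
        HasDerivAt w (g (c t)).toReal (c t) ∧ g (c t) ≠ ∞ := by
      set s : Set ℝ := {x | ¬ (HasDerivAt w (g x).toReal x ∧ g x ≠ ∞)} with hs_def
      have hs0 : volume s = 0 := by
        rw [← MeasureTheory.ae_iff] at *
        exact hA
      set N := toMeasurable volume s with hN_def
      have hNm : MeasurableSet N := measurableSet_toMeasurable _ _
      have hN0 : volume N = 0 := by rw [hN_def, measure_toMeasurable]; exact hs0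
      have hcovers : {t | ¬ (HasDerivAt w (g (c t)).toReal (c t) ∧ g (c t) ≠ ∞)}
          ⊆ c ⁻¹' N := fun t ht => subset_toMeasurable _ _ ht
      rw [MeasureTheory.ae_iff]
      refine le_antisymm ?_ zero_le
      calc ((lsMeasure hc).restrict (Icc 0 T))
            {t | ¬ (HasDerivAt w (g (c t)).toReal (c t) ∧ g (c t) ≠ ∞)}
          ≤ ((lsMeasure hc).restrict (Icc 0 T)) (c ⁻¹' N) := measure_mono hcovers
        _ ≤ (lsMeasure hc) (c ⁻¹' N) := Measure.restrict_le_self _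
        _ = Measure.map c (lsMeasure hc) N := (Measure.map_apply hcm hNm).symm
        _ = 0 := mapNull N hNm hN0
    filter_upwards [hrn, hpull] with t h1 h2
    refine ⟨h2.1.differentiableAt, ?_⟩
    rw [h1, h2.1.deriv, ENNReal.ofReal_toReal h2.2]
end

section
/- Let T > 0, let c : ℝ → ℝ be nondecreasing and Lipschitz with c(0) = 0 and constant outside [0, T], and let w : ℝ → ℝ be nondecreasing and Lipschitz and constant outside [0, c(T)]. Set m := w ∘ c, and let dμ_m/dμ_c be the Radon–Nikodym derivative of the Lebesgue–Stieltjes measure of m with respect to that of c on [0, T]. Then for every Borel measurable function g : ℝ → [0, ∞], ∫_{[0, T]} g((dμ_m/dμ_c)(t)) dμ_c(t) = ∫_{[0, c(T)]} g(w'(z)) dz, where w' is the Lebesgue-a.e. defined derivative of w and the right-hand integral is with respect to Lebesgue measure. (This is the change-of-variables identity relating the rate-function cost of the observed-rate trace to the cost expressed in terms of empirical means and sampling frequencies.) -/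
open MeasureTheory Set Filter Topology Function

lemma stieltjes_coe {f : ℝ → ℝ} (hf : Monotone f) (hcont : Continuous f) :
    ⇑hf.stieltjesFunction = f := by
  funext x
  rw [hf.stieltjesFunction_eq]
  exact rightLim_eq_of_tendsto (h := nhdsGT_neBot x)
    ((hcont.tendsto x).mono_left nhdsWithin_le_nhds)

lemma leftLim_eq_self_s13 {f : ℝ → ℝ} (hcont : Continuous f) (x : ℝ) : leftLim f x = f x :=
  leftLim_eq_of_tendsto (h := nhdsLT_neBot x)
    ((hcont.tendsto x).mono_left nhdsWithin_le_nhds)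

lemma tendsto_atBot_of_const {f : ℝ → ℝ} {a : ℝ} (h : ∀ z, z ≤ a → f z = f a) :
    Tendsto f atBot (𝓝 (f a)) :=
  Tendsto.congr' ((eventually_le_atBot a).mono fun z hz => (h z hz).symm) tendsto_const_nhds

lemma tendsto_atTop_of_const {f : ℝ → ℝ} {a : ℝ} (h : ∀ z, a ≤ z → f z = f a) :
    Tendsto f atTop (𝓝 (f a)) :=
  Tendsto.congr' ((eventually_ge_atTop a).mono fun z hz => (h z hz).symm) tendsto_const_nhds

lemma monotone_deriv_nonneg {f : ℝ → ℝ} (hf : Monotone f) (z : ℝ) : 0 ≤ deriv f z := by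
  by_cases h : DifferentiableAt ℝ f z
  · have h1 : Tendsto (slope f z) (𝓝[>] z) (𝓝 (deriv f z)) :=
      (hasDerivAt_iff_tendsto_slope.1 h.hasDerivAt).mono_left
        (nhdsWithin_mono _ fun y hy => ne_of_gt hy)
    refine ge_of_tendsto h1 (eventually_nhdsWithin_of_forall fun y hy => ?_)
    rw [slope_def_field]
    exact div_nonneg (sub_nonneg.2 (hf (le_of_lt hy))) (sub_nonneg.2 (le_of_lt hy))
  · simp [deriv_zero_of_not_differentiableAt h]

lemma stieltjes_measure_Iic {f : ℝ → ℝ} (hf : Monotone f) (hcont : Continuous f)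
    {l : ℝ} (hl : Tendsto f atBot (𝓝 l)) (x : ℝ) :
    hf.stieltjesFunction.measure (Iic x) = ENNReal.ofReal (f x - l) := by
  have h := hf.stieltjesFunction.measure_Iic (l := l)
    (by rw [stieltjes_coe hf hcont]; exact hl) x
  rwa [stieltjes_coe hf hcont] at h

lemma stieltjes_measure_univ {f : ℝ → ℝ} (hf : Monotone f) (hcont : Continuous f)
    {l u : ℝ} (hl : Tendsto f atBot (𝓝 l)) (hu : Tendsto f atTop (𝓝 u)) :
    hf.stieltjesFunction.measure univ = ENNReal.ofReal (u - l) :=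
  hf.stieltjesFunction.measure_univ
    (by rw [stieltjes_coe hf hcont]; exact hl)
    (by rw [stieltjes_coe hf hcont]; exact hu)

lemma map_stieltjes_measure {c : ℝ → ℝ} (hc : Monotone c) (hcont : Continuous c)
    {T : ℝ} (hT : 0 ≤ T) (hc0 : c 0 = 0) (hcleft : ∀ t, t ≤ 0 → c t = c 0)
    (hcright : ∀ t, T ≤ t → c t = c T) :
    Measure.map c hc.stieltjesFunction.measure = volume.restrict (Icc 0 (c T)) := by
  have hbot : Tendsto c atBot (𝓝 0) := hc0 ▸ tendsto_atBot_of_const hcleft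
  have htop : Tendsto c atTop (𝓝 (c T)) := tendsto_atTop_of_const hcright
  have hIic : ∀ x, hc.stieltjesFunction.measure (Iic x) = ENNReal.ofReal (c x) := by
    intro x
    rw [stieltjes_measure_Iic hc hcont hbot x, sub_zero]
  have hc_nonneg : ∀ t, 0 ≤ c t := by
    intro t
    rcases le_total t 0 with h | h
    · rw [hcleft t h, hc0]
    · rw [← hc0]; exact hc h
  have hc_le : ∀ t, c t ≤ c T := by
    intro t
    rcases le_total t T with h | h
    · exact hc h
    · exact le_of_eq (hcright t h)
  haveI : IsFiniteMeasure hc.stieltjesFunction.measure := by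
    constructor
    rw [stieltjes_measure_univ hc hcont hbot htop]
    exact ENNReal.ofReal_lt_top
  refine Measure.ext_of_Iic _ _ (fun y => ?_)
  rw [Measure.map_apply hcont.measurable measurableSet_Iic,
    Measure.restrict_apply measurableSet_Iic]
  rcases lt_or_ge y 0 with hy | hy
  · have h1 : c ⁻¹' Iic y = ∅ := by
      ext t
      simp only [mem_preimage, mem_Iic, mem_empty_iff_false, iff_false, not_le]
      exact lt_of_lt_of_le hy (hc_nonneg t)
    have h2 : Iic y ∩ Icc 0 (c T) = ∅ := by
      ext z
      simp only [mem_inter_iff, mem_Iic, mem_Icc, mem_empty_iff_false, iff_false]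
      rintro ⟨h3, h4, -⟩
      linarith
    rw [h1, h2]
    simp
  rcases le_or_gt (c T) y with hy2 | hy2
  · have h1 : c ⁻¹' Iic y = univ := by
      ext t
      simp only [mem_preimage, mem_Iic, mem_univ, iff_true]
      exact le_trans (hc_le t) hy2
    have h2 : Iic y ∩ Icc 0 (c T) = Icc 0 (c T) :=
      inter_eq_self_of_subset_right (fun z hz => le_trans hz.2 hy2)
    rw [h1, h2, Real.volume_Icc, stieltjes_measure_univ hc hcont hbot htop]
  · set S := c ⁻¹' Iic y with hS
    have hS0 : (0 : ℝ) ∈ S := by simp [hS, hc0, hy]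
    have hSb : BddAbove S := by
      refine ⟨T, fun t ht => ?_⟩
      by_contra h
      push_neg at h
      have : c t = c T := hcright t h.le
      simp only [hS, mem_preimage, mem_Iic] at ht
      rw [this] at ht
      exact absurd ht (not_le.2 hy2)
    have hScl : IsClosed S := isClosed_Iic.preimage hcont
    set s := sSup S with hs
    have hsS : s ∈ S := hScl.csSup_mem ⟨0, hS0⟩ hSb
    have hSeq : S = Iic s := by
      apply subset_antisymm (fun t ht => le_csSup hSb ht)
      intro t ht
      simp only [hS, mem_preimage, mem_Iic] at hsS ⊢
      exact le_trans (hc ht) hsS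
    have hcs : c s = y := by
      refine le_antisymm hsS ?_
      by_contra h
      push_neg at h
      obtain ⟨ε, εpos, hball⟩ := Metric.isOpen_iff.1
        (isOpen_lt hcont (continuous_const (y := y))) s h
      have hmem : s + ε / 2 ∈ S := by
        have : s + ε / 2 ∈ Metric.ball s ε := by
          simp only [Metric.mem_ball, Real.dist_eq]
          rw [abs_of_pos (by linarith)]
          linarith
        have hlt : c (s + ε / 2) < y := hball this
        exact le_of_lt hlt
      have := le_csSup hSb hmem
      linarith
    have h2 : Iic y ∩ Icc 0 (c T) = Icc 0 y := by
      ext z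
      simp only [mem_inter_iff, mem_Iic, mem_Icc]
      constructor
      · rintro ⟨h3, h4, -⟩; exact ⟨h4, h3⟩
      · rintro ⟨h3, h4⟩; exact ⟨h4, h3, le_trans h4 hy2.le⟩
    rw [hSeq, h2, Real.volume_Icc, hIic s, hcs, sub_zero]


lemma stieltjes_measure_Ici {f : ℝ → ℝ} (hf : Monotone f) (hcont : Continuous f)
    {l : ℝ} (hl : Tendsto f atTop (𝓝 l)) (x : ℝ) :
    hf.stieltjesFunction.measure (Ici x) = ENNReal.ofReal (l - f x) := by
  have h := hf.stieltjesFunction.measure_Ici (l := l)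
    (by rw [stieltjes_coe hf hcont]; exact hl) x
  rwa [stieltjes_coe hf hcont, leftLim_eq_self_s13 hcont] at h

lemma stieltjes_eq_withDensity_deriv {w : ℝ → ℝ} (hw : Monotone w) (Kw : NNReal)
    (hwlip : LipschitzWith Kw w) :
    volume.withDensity (fun z => ENNReal.ofReal (deriv w z)) = hw.stieltjesFunction.measure := by
  have hwcont : Continuous w := hwlip.continuous
  have hslope : ∀ a b : ℝ, a ≤ b → w b - w a ≤ (Kw : ℝ) * (b - a) := by
    intro a b hab
    have h := hwlip.dist_le_mul a b
    rw [Real.dist_eq, Real.dist_eq] at h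
    have h1 : w a - w b ≤ |w a - w b| := le_abs_self _
    have h2 : |a - b| = b - a := by rw [abs_sub_comm]; exact abs_of_nonneg (by linarith)
    rw [h2] at h
    have := (abs_le.1 h).2
    linarith [abs_sub_comm (w a) (w b) ▸ (le_abs_self (w b - w a))]
  set u : ℝ → ℝ := fun z => (Kw : ℝ) * z - w z with hu
  have hu_mono : Monotone u := by
    intro a b hab
    have := hslope a b hab
    simp only [hu]
    linarith
  have hu_cont : Continuous u := (continuous_const.mul continuous_id).sub hwcont
  have key : hw.stieltjesFunction.measure + hu_mono.stieltjesFunction.measure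
      = (Kw : ENNReal) • volume := by
    refine Measure.ext_of_Ioc' _ _ (fun a b hab => ?_) (fun a b hab => ?_)
    · rw [Measure.add_apply, StieltjesFunction.measure_Ioc, StieltjesFunction.measure_Ioc]
      exact ENNReal.add_ne_top.2 ⟨ENNReal.ofReal_ne_top, ENNReal.ofReal_ne_top⟩
    · rw [Measure.add_apply, StieltjesFunction.measure_Ioc, StieltjesFunction.measure_Ioc,
        stieltjes_coe hw hwcont, stieltjes_coe hu_mono hu_cont,
        Measure.smul_apply, Real.volume_Ioc, smul_eq_mul]
      rw [← ENNReal.ofReal_add (sub_nonneg.2 (hw hab.le)) (sub_nonneg.2 (hu_mono hab.le)),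
        ← ENNReal.ofReal_coe_nnreal, ← ENNReal.ofReal_mul (by positivity)]
      congr 1
      simp only [hu]
      ring
  have hle : hw.stieltjesFunction.measure ≤ (Kw : ENNReal) • volume :=
    key ▸ Measure.le_add_right le_rfl
  have hac : hw.stieltjesFunction.measure ≪ volume :=
    Measure.absolutelyContinuous_of_le_smul hle
  have h1 : (fun z => ENNReal.ofReal (deriv w z))
      =ᵐ[volume] (hw.stieltjesFunction.measure).rnDeriv volume := by
    filter_upwards [hw.ae_hasDerivAt, Measure.rnDeriv_ne_top hw.stieltjesFunction.measure volume]
      with z hz hz2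
    rw [hz.deriv, ENNReal.ofReal_toReal hz2]
  rw [withDensity_congr_ae h1, Measure.withDensity_rnDeriv_eq _ _ hac]

/-- Change-of-variables identity: with `c`, `w`, `m = w ∘ c` as in the sampling
setup, for every Borel function `g : ℝ → [0,∞]`,
`∫_{[0,T]} g((dμ_m/dμ_c)(t)) dμ_c(t) = ∫_{[0, c T]} g(w'(z)) dz`. -/
theorem stmt13 (T : ℝ) (hT : 0 < T) (c w : ℝ → ℝ)
    (hc : Monotone c) (Kc : NNReal) (hclip : LipschitzWith Kc c)
    (hc0 : c 0 = 0) (hcleft : ∀ t : ℝ, t ≤ 0 → c t = c 0)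
    (hcright : ∀ t : ℝ, T ≤ t → c t = c T)
    (hw : Monotone w) (Kw : NNReal) (hwlip : LipschitzWith Kw w)
    (hwleft : ∀ z : ℝ, z ≤ 0 → w z = w 0)
    (hwright : ∀ z : ℝ, c T ≤ z → w z = w (c T))
    (g : ℝ → ENNReal) (hg : Measurable g) :
    ∫⁻ t in Set.Icc 0 T,
        g ((((lsMeasure (hw.comp hc)).restrict (Set.Icc 0 T)).rnDeriv
            ((lsMeasure hc).restrict (Set.Icc 0 T)) t).toReal)
        ∂(lsMeasure hc) =
      ∫⁻ z in Set.Icc 0 (c T), g (deriv w z) ∂(volume) := by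
  simp only [lsMeasure]
  have hccont : Continuous c := hclip.continuous
  have hwcont : Continuous w := hwlip.continuous
  have hmcont : Continuous (w ∘ c) := hwcont.comp hccont
  have hcT0 : 0 ≤ c T := by rw [← hc0]; exact hc hT.le
  have hc_nonneg : ∀ t, 0 ≤ c t := by
    intro t
    rcases le_total t 0 with h | h
    · rw [hcleft t h, hc0]
    · rw [← hc0]; exact hc h
  have hc_le : ∀ t, c t ≤ c T := by
    intro t
    rcases le_total t T with h | h
    · exact hc h
    · exact le_of_eq (hcright t h)
  -- limits of c and m = w ∘ c
  have hbot_c : Tendsto c atBot (𝓝 0) := hc0 ▸ tendsto_atBot_of_const hcleft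
  have htop_c : Tendsto c atTop (𝓝 (c T)) := tendsto_atTop_of_const hcright
  have hm0 : (w ∘ c) 0 = w 0 := by simp [hc0]
  have hbot_m : Tendsto (w ∘ c) atBot (𝓝 (w 0)) := by
    have := tendsto_atBot_of_const (f := w ∘ c) (a := 0)
      (fun z hz => by simp [Function.comp, hcleft z hz])
    rwa [hm0] at this
  have htop_m : Tendsto (w ∘ c) atTop (𝓝 (w (c T))) := by
    have := tendsto_atTop_of_const (f := w ∘ c) (a := T)
      (fun z hz => by simp [Function.comp, hcright z hz])
    exact this
  -- finiteness
  haveI hfinc : IsFiniteMeasure hc.stieltjesFunction.measure := by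
    constructor
    rw [stieltjes_measure_univ hc hccont hbot_c htop_c]
    exact ENNReal.ofReal_lt_top
  haveI hfinm : IsFiniteMeasure (hw.comp hc).stieltjesFunction.measure := by
    constructor
    rw [stieltjes_measure_univ (hw.comp hc) hmcont hbot_m htop_m]
    exact ENNReal.ofReal_lt_top
  -- pushforward of μ_c under c is Lebesgue on [0, c T]
  have hmap : Measure.map c hc.stieltjesFunction.measure = volume.restrict (Icc 0 (c T)) :=
    map_stieltjes_measure hc hccont hT.le hc0 hcleft hcright
  -- fibers of c are μ_c-null
  have hfiber : ∀ y : ℝ, hc.stieltjesFunction.measure (c ⁻¹' {y}) = 0 := by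
    intro y
    rw [← Measure.map_apply hccont.measurable (measurableSet_singleton y), hmap,
      Measure.restrict_apply (measurableSet_singleton y)]
    exact measure_mono_null inter_subset_left Real.volume_singleton
  -- the density of μ_w with respect to Lebesgue
  have hwdens : volume.withDensity (fun z => ENNReal.ofReal (deriv w z))
      = hw.stieltjesFunction.measure := stieltjes_eq_withDensity_deriv hw Kw hwlip
  have hwIcc : ∀ x : ℝ, hw.stieltjesFunction.measure (Icc 0 x)
      = ENNReal.ofReal (w x - w 0) := by
    intro x
    have h := hw.stieltjesFunction.measure_Icc 0 x
    rwa [stieltjes_coe hw hwcont, leftLim_eq_self_s13 hwcont] at h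
  have hD : Measurable (fun t => ENNReal.ofReal (deriv w (c t))) :=
    ENNReal.measurable_ofReal.comp ((measurable_deriv w).comp hccont.measurable)
  have hDw : Measurable (fun z => ENNReal.ofReal (deriv w z)) :=
    ENNReal.measurable_ofReal.comp (measurable_deriv w)
  -- main identity: μ_m = μ_c.withDensity (ofReal ∘ deriv w ∘ c)
  have hmain : (hw.comp hc).stieltjesFunction.measure
      = hc.stieltjesFunction.measure.withDensity
        (fun t => ENNReal.ofReal (deriv w (c t))) := by
    refine Measure.ext_of_Iic _ _ (fun x => ?_)
    have hL : (hw.comp hc).stieltjesFunction.measure (Iic x)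
        = ENNReal.ofReal (w (c x) - w 0) :=
      stieltjes_measure_Iic (hw.comp hc) hmcont hbot_m x
    have hsets : Iic x =ᵐ[hc.stieltjesFunction.measure] c ⁻¹' Iic (c x) := by
      rw [MeasureTheory.ae_eq_set]
      constructor
      · refine measure_mono_null ?_ (measure_empty (μ := hc.stieltjesFunction.measure))
        intro t ht
        exact absurd (hc ht.1) ht.2
      · refine measure_mono_null ?_ (hfiber (c x))
        rintro t ⟨ht1, ht2⟩
        simp only [mem_preimage, mem_Iic, mem_Iic, not_le] at ht1 ht2
        simp only [mem_preimage, mem_singleton_iff]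
        exact le_antisymm ht1 (hc ht2.le)
    have hIcc_eq : Iic (c x) ∩ Icc 0 (c T) = Icc 0 (c x) := by
      ext z
      simp only [mem_inter_iff, mem_Iic, mem_Icc]
      constructor
      · rintro ⟨h1, h2, -⟩; exact ⟨h2, h1⟩
      · rintro ⟨h1, h2⟩; exact ⟨h2, h1, le_trans h2 (hc_le x)⟩
    rw [hL, withDensity_apply _ measurableSet_Iic, setLIntegral_congr hsets,
      ← setLIntegral_map measurableSet_Iic hDw hccont.measurable, hmap,
      Measure.restrict_restrict measurableSet_Iic, hIcc_eq,
      ← withDensity_apply _ measurableSet_Icc, hwdens, hwIcc]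
  -- the restrictions to [0,T] are trivial
  have hres_c : hc.stieltjesFunction.measure.restrict (Icc 0 T)
      = hc.stieltjesFunction.measure := by
    apply Measure.restrict_eq_self_of_ae_mem
    have hsub : (Icc 0 T)ᶜ ⊆ Iic 0 ∪ Ici T := by
      intro t ht
      simp only [mem_compl_iff, mem_Icc, not_and_or, not_le] at ht
      rcases ht with h | h
      · exact Or.inl (le_of_lt h)
      · exact Or.inr (le_of_lt h)
    have h0 : hc.stieltjesFunction.measure (Icc 0 T)ᶜ = 0 := by
      refine measure_mono_null hsub (measure_union_null ?_ ?_)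
      · rw [stieltjes_measure_Iic hc hccont hbot_c 0, hc0]; simp
      · rw [stieltjes_measure_Ici hc hccont htop_c T]; simp
    exact ae_iff.2 h0
  have hres_m : (hw.comp hc).stieltjesFunction.measure.restrict (Icc 0 T)
      = (hw.comp hc).stieltjesFunction.measure := by
    apply Measure.restrict_eq_self_of_ae_mem
    have hsub : (Icc 0 T)ᶜ ⊆ Iic 0 ∪ Ici T := by
      intro t ht
      simp only [mem_compl_iff, mem_Icc, not_and_or, not_le] at ht
      rcases ht with h | h
      · exact Or.inl (le_of_lt h)
      · exact Or.inr (le_of_lt h)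
    have h0 : (hw.comp hc).stieltjesFunction.measure (Icc 0 T)ᶜ = 0 := by
      refine measure_mono_null hsub (measure_union_null ?_ ?_)
      · rw [stieltjes_measure_Iic (hw.comp hc) hmcont hbot_m 0]
        simp [hc0]
      · rw [stieltjes_measure_Ici (hw.comp hc) hmcont htop_m T]
        simp [Function.comp]
    exact ae_iff.2 h0
  rw [hres_m, hres_c]
  have hrn : (hw.comp hc).stieltjesFunction.measure.rnDeriv hc.stieltjesFunction.measure
      =ᵐ[hc.stieltjesFunction.measure] (fun t => ENNReal.ofReal (deriv w (c t))) := by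
    rw [hmain]
    exact Measure.rnDeriv_withDensity hc.stieltjesFunction.measure hD
  calc ∫⁻ t, g (((hw.comp hc).stieltjesFunction.measure.rnDeriv
          hc.stieltjesFunction.measure t).toReal) ∂hc.stieltjesFunction.measure
      = ∫⁻ t, g (deriv w (c t)) ∂hc.stieltjesFunction.measure := by
        refine lintegral_congr_ae (hrn.mono fun t ht => ?_)
        dsimp only at ht ⊢
        rw [ht, ENNReal.toReal_ofReal (monotone_deriv_nonneg hw _)]
    _ = ∫⁻ z, g (deriv w z) ∂(Measure.map c hc.stieltjesFunction.measure) :=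
        (lintegral_map (hg.comp (measurable_deriv w)) hccont.measurable).symm
    _ = ∫⁻ z in Icc 0 (c T), g (deriv w z) ∂volume := by rw [hmap]
end

section
/- Assume D_S is nonempty. Then the function f^S attains its infimum over D_S: there exists φ̂ ∈ D_S such that f^S(φ̂) ≤ f^S(φ) for all φ ∈ D_S. -/
open MeasureTheory Finset
open Filter Topology

/-- The Cramér rate function `Λ*(x) = sup_η (η x - log E[exp(η X)])`, valued in
`[0, ∞]`. -/
noncomputable def cramerRate {Ω : Type*} [MeasureSpace Ω] (X : Ω → ℝ) (x : ℝ) :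
    ENNReal :=
  ⨆ η : ℝ, ENNReal.ofReal (η * x - Real.log (∫ ω, Real.exp (η * X ω)))

/-- The unique common drift `w'` determined by `φ` on the subset `S`:
`w = (Σ_{i∈S} λ_i/φ_i - 1)/(Σ_{i∈S} 1/φ_i)`. -/
noncomputable def wS {N : ℕ} (S : Finset (Fin N)) (lam φ : Fin N → ℝ) : ℝ :=
  ((∑ i ∈ S, lam i / φ i) - 1) / (∑ i ∈ S, (φ i)⁻¹)

/-- The domain `D_S`: tuples `φ` with `R_{min,i} ≤ φ_i ≤ μ_i` on `S` admitting
scheduling fractions `c_i' ≥ 0`, `Σ_{i∈S} c_i' = 1`, and a common positive drift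
`w' = λ_i - c_i' φ_i` for all `i ∈ S`. -/
def DS {N : ℕ} (S : Finset (Fin N)) (Rmin μv lam : Fin N → ℝ) : Set (Fin N → ℝ) :=
  {φ | (∀ i ∈ S, Rmin i ≤ φ i ∧ φ i ≤ μv i) ∧
    ∃ c : Fin N → ℝ, ∃ w : ℝ, (∀ i ∈ S, 0 ≤ c i) ∧ (∑ i ∈ S, c i) = 1 ∧ 0 < w ∧
      ∀ i ∈ S, lam i - c i * φ i = w}

/-- `f^S(φ) = (Σ_{i∈S} c_i' Λ*_i(φ_i)) / w'`, where `c', w'` are the (unique)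
fractions and drift determined by `φ` (given by the explicit formulas). -/
noncomputable def fS {Ω : Type*} [MeasureSpace Ω] {N : ℕ} (X : Fin N → Ω → ℝ)
    (S : Finset (Fin N)) (lam : Fin N → ℝ) (φ : Fin N → ℝ) : ENNReal :=
  (∑ i ∈ S, ENNReal.ofReal ((lam i - wS S lam φ) / φ i) * cramerRate (X i) (φ i)) /
    ENNReal.ofReal (wS S lam φ)

section Aux

lemma aux_lsc_iSup {α : Type*} [TopologicalSpace α] {ι : Sort*} {s : Set α} {x : α}
    {f : ι → α → ENNReal} (h : ∀ i, LowerSemicontinuousWithinAt (f i) s x) :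
    LowerSemicontinuousWithinAt (fun z => ⨆ i, f i z) s x := by
  intro y hy
  change y < ⨆ i, f i x at hy
  rw [lt_iSup_iff] at hy
  obtain ⟨i, hi⟩ := hy
  filter_upwards [h i y hi] with z hz
  exact hz.trans_le (le_iSup (fun j => f j z) i)

lemma aux_lsc_div {α : Type*} [TopologicalSpace α] {s : Set α} {x : α} {a w : α → ℝ}
    (ha : ContinuousWithinAt a s x) (hw : ContinuousWithinAt w s x) (hw0 : 0 ≤ w x) :
    LowerSemicontinuousWithinAt
      (fun z => ENNReal.ofReal (a z) / ENNReal.ofReal (w z)) s x := by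
  rcases lt_or_eq_of_le hw0 with hpos | hzero
  · intro y hy
    have hy' : y < ENNReal.ofReal (a x / w x) := by
      rwa [ENNReal.ofReal_div_of_pos hpos]
    have hcont : ContinuousWithinAt (fun z => ENNReal.ofReal (a z / w z)) s x :=
      (ENNReal.continuous_ofReal.continuousAt).comp_continuousWithinAt
        (ha.div hw hpos.ne')
    have hev1 : ∀ᶠ z in nhdsWithin x s, y < ENNReal.ofReal (a z / w z) :=
      hcont (Ioi_mem_nhds hy')
    have hev2 : ∀ᶠ z in nhdsWithin x s, 0 < w z :=
      hw (Ioi_mem_nhds hpos)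
    filter_upwards [hev1, hev2] with z h1 h2
    rwa [ENNReal.ofReal_div_of_pos h2] at h1
  · intro y hy
    rcases le_or_gt (a x) 0 with hax | hax
    · exfalso
      simp [ENNReal.ofReal_eq_zero.2 hax] at hy
    · have hyne : y ≠ ⊤ := by
        intro h
        rw [h] at hy
        exact (not_top_lt hy)
      set Y := y.toReal + 1 with hY
      have hYpos : 0 < Y := by positivity
      set d := (a x / 2) / Y with hd
      have hdpos : 0 < d := by positivity
      have hev1 : ∀ᶠ z in nhdsWithin x s, a x / 2 < a z :=
        ha (Ioi_mem_nhds (by linarith))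
      have hev2 : ∀ᶠ z in nhdsWithin x s, w z < d := by
        apply hw (Iio_mem_nhds ?_)
        rw [← hzero]; exact hdpos
      filter_upwards [hev1, hev2] with z h1 h2
      have haz : 0 < a z := by linarith
      rcases le_or_gt (w z) 0 with hwz | hwz
      · rw [ENNReal.ofReal_eq_zero.2 hwz, ENNReal.div_zero (by positivity)]
        exact hyne.lt_top
      · rw [← ENNReal.ofReal_div_of_pos hwz]
        have hYlt : Y ≤ a z / w z := by
          rw [le_div_iff₀ hwz]
          have h4 : w z * Y < a x / 2 := (lt_div_iff₀ hYpos).mp h2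
          nlinarith
        calc y < ENNReal.ofReal Y := by
              rw [ENNReal.lt_ofReal_iff_toReal_lt hyne]; linarith
          _ ≤ ENNReal.ofReal (a z / w z) := ENNReal.ofReal_le_ofReal hYlt

lemma aux_sublevel_closed {α : Type*} [TopologicalSpace α] {K : Set α} (hKc : IsClosed K)
    {f : α → ENNReal} (hf : LowerSemicontinuousOn f K) (a : ENNReal) :
    IsClosed {z | z ∈ K ∧ f z ≤ a} := by
  rw [isClosed_iff_frequently]
  intro x hx
  have hxK : x ∈ K := by
    rw [← hKc.closure_eq]
    exact mem_closure_iff_frequently.2 (hx.mono fun z hz => hz.1)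
  refine ⟨hxK, ?_⟩
  by_contra hlt
  rw [not_le] at hlt
  have hclos : x ∈ closure {z | z ∈ K ∧ f z ≤ a} := mem_closure_iff_frequently.2 hx
  rw [mem_closure_iff_nhdsWithin_neBot] at hclos
  have hle : nhdsWithin x {z | z ∈ K ∧ f z ≤ a} ≤ nhdsWithin x K :=
    nhdsWithin_mono x fun z hz => hz.1
  have hev : ∀ᶠ z in nhdsWithin x {z | z ∈ K ∧ f z ≤ a}, a < f z :=
    hle (hf x hxK a hlt)
  have hmem : ∀ᶠ z in nhdsWithin x {z | z ∈ K ∧ f z ≤ a}, z ∈ {z | z ∈ K ∧ f z ≤ a} :=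
    self_mem_nhdsWithin
  obtain ⟨z, h1, h2⟩ := (hev.and hmem).exists
  exact absurd h2.2 h1.not_ge

lemma aux_min_attained {α : Type*} [TopologicalSpace α] {K : Set α} (hK : IsCompact K)
    (hKc : IsClosed K) (hne : K.Nonempty) {f : α → ENNReal}
    (hf : LowerSemicontinuousOn f K) :
    ∃ x ∈ K, ∀ z ∈ K, f x ≤ f z := by
  set m : ENNReal := ⨅ z ∈ K, f z with hm
  by_cases hmtop : m = ⊤
  · obtain ⟨x, hx⟩ := hne
    refine ⟨x, hx, fun z hz => ?_⟩
    have : m ≤ f z := iInf₂_le z hz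
    rw [hmtop] at this
    simp [top_le_iff.1 this]
  · set C : ℕ → Set α := fun n => {z | z ∈ K ∧ f z ≤ m + (↑(n + 1) : ENNReal)⁻¹} with hC
    have hCne : ∀ n, (C n).Nonempty := by
      intro n
      by_contra h
      rw [Set.not_nonempty_iff_eq_empty] at h
      have : m + (↑(n + 1) : ENNReal)⁻¹ ≤ m := by
        rw [hm]
        refine le_iInf₂ fun z hz => ?_
        by_contra hle
        push_neg at hle
        have hzC : z ∈ C n := ⟨hz, by rw [hm]; exact_mod_cast hle.le⟩
        exact absurd hzC (Set.eq_empty_iff_forall_notMem.1 h z)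
      have hlt : m < m + (↑(n + 1) : ENNReal)⁻¹ :=
        ENNReal.lt_add_right hmtop (by simp)
      exact absurd this hlt.not_ge
    have hCdec : ∀ n, C (n + 1) ⊆ C n := by
      intro n z hz
      refine ⟨hz.1, hz.2.trans
        (add_le_add_right (ENNReal.inv_le_inv.2 (by norm_cast; omega)) m)⟩
    have hCclosed : ∀ n, IsClosed (C n) := fun n => aux_sublevel_closed hKc hf _
    have hCcomp : IsCompact (C 0) := hK.of_isClosed_subset (hCclosed 0) (fun z hz => hz.1)
    obtain ⟨x, hx⟩ := IsCompact.nonempty_iInter_of_sequence_nonempty_isCompact_isClosed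
      C hCdec hCne hCcomp hCclosed
    simp only [Set.mem_iInter] at hx
    refine ⟨x, (hx 0).1, fun z hz => ?_⟩
    have hxm : f x ≤ m := by
      refine ENNReal.le_of_forall_pos_le_add fun ε hε hmlt => ?_
      obtain ⟨n, hn⟩ := ENNReal.exists_inv_nat_lt (a := (ε : ENNReal)) (by simpa using hε.ne')
      refine (hx n).2.trans ?_
      gcongr
      refine le_trans ?_ hn.le
      exact ENNReal.inv_le_inv.2 (by norm_cast; omega)
    exact hxm.trans (iInf₂_le z hz)

lemma aux_integrable {Ω : Type*} [MeasureSpace Ω] [IsProbabilityMeasure (volume : Measure Ω)]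
    {X : Ω → ℝ} (hm : Measurable X) (hf : (Set.range X).Finite) {g : ℝ → ℝ}
    (hg : Measurable g) : Integrable (fun ω => g (X ω)) := by
  obtain ⟨C, hC⟩ := (hf.image fun r => |g r|).bddAbove
  refine ⟨(hg.comp hm).aestronglyMeasurable, HasFiniteIntegral.of_bounded (C := C) ?_⟩
  filter_upwards with ω
  rw [Real.norm_eq_abs]
  exact hC ⟨X ω, ⟨ω, rfl⟩, rfl⟩

lemma aux_exp_quad {s : ℝ} (hs : |s| ≤ 1) : Real.exp s ≤ 1 + s + s ^ 2 := by
  have h := Real.exp_bound hs (n := 2) (by norm_num)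
  have h2 : ∑ m ∈ Finset.range 2, s ^ m / m.factorial = 1 + s := by
    simp [Finset.sum_range_succ]
  rw [h2] at h
  have h3 : |s| ^ 2 = s ^ 2 := sq_abs s
  have h4 : Real.exp s - (1 + s) ≤ |s| ^ 2 * ((2 + 1) / (2 * 2)) := by
    calc Real.exp s - (1 + s) ≤ |Real.exp s - (1 + s)| := le_abs_self _
      _ ≤ _ := by exact_mod_cast h
  rw [h3] at h4
  nlinarith [sq_nonneg s]

lemma aux_cramer_pos {Ω : Type*} [MeasureSpace Ω] [IsProbabilityMeasure (volume : Measure Ω)]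
    {X : Ω → ℝ} (hm : Measurable X) (hf : (Set.range X).Finite) {x : ℝ}
    (hx : x < ∫ ω, X ω) : 0 < cramerRate X x := by
  set μ := ∫ ω, X ω with hμ
  obtain ⟨C, hC⟩ := (hf.image fun r => |r - x|).bddAbove
  set B := max C 1 with hB
  have hBpos : (0:ℝ) < B := lt_of_lt_of_le one_pos (le_max_right _ _)
  have hXB : ∀ ω, |X ω - x| ≤ B := fun ω =>
    le_trans (hC ⟨X ω, ⟨ω, rfl⟩, rfl⟩) (le_max_left _ _)
  set δ := μ - x with hδ
  have hδpos : 0 < δ := sub_pos.2 hx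
  set m := min (1 / B) (δ / (2 * B ^ 2)) with hmdef
  have hmpos : 0 < m := lt_min (by positivity) (by positivity)
  set η := -m with hη
  have habs : ∀ ω, |η * (X ω - x)| ≤ 1 := by
    intro ω
    rw [abs_mul, hη, abs_neg, abs_of_pos hmpos]
    calc m * |X ω - x| ≤ (1 / B) * B := by
          apply mul_le_mul (min_le_left _ _) (hXB ω) (abs_nonneg _) (by positivity)
      _ = 1 := by field_simp
  have hpt : ∀ ω, Real.exp (η * (X ω - x)) ≤
      1 + η * (X ω - x) + η ^ 2 * (X ω - x) ^ 2 := by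
    intro ω
    have := aux_exp_quad (habs ω)
    calc Real.exp (η * (X ω - x)) ≤ 1 + η * (X ω - x) + (η * (X ω - x)) ^ 2 := this
      _ = 1 + η * (X ω - x) + η ^ 2 * (X ω - x) ^ 2 := by ring
  have int_exp : Integrable (fun ω => Real.exp (η * (X ω - x))) :=
    aux_integrable hm hf (g := fun r => Real.exp (η * (r - x)))
      (by fun_prop)
  have int_quad : Integrable (fun ω => 1 + η * (X ω - x) + η ^ 2 * (X ω - x) ^ 2) :=
    aux_integrable hm hf (g := fun r => 1 + η * (r - x) + η ^ 2 * (r - x) ^ 2)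
      (by fun_prop)
  have int_lin : Integrable (fun ω => 1 + η * (X ω - x)) :=
    aux_integrable hm hf (g := fun r => 1 + η * (r - x)) (by fun_prop)
  have int_sq : Integrable (fun ω => η ^ 2 * (X ω - x) ^ 2) :=
    aux_integrable hm hf (g := fun r => η ^ 2 * (r - x) ^ 2) (by fun_prop)
  have int_X : Integrable X := by
    have := aux_integrable hm hf (g := fun r => r) measurable_id
    simpa using this
  set I := ∫ ω, Real.exp (η * (X ω - x)) with hI
  have hIpos : 0 < I := by
    have hlow : ∀ ω, Real.exp (-1) ≤ Real.exp (η * (X ω - x)) := by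
      intro ω
      apply Real.exp_le_exp.2
      have := habs ω
      rw [abs_le] at this
      linarith [this.1]
    calc (0:ℝ) < Real.exp (-1) := Real.exp_pos _
      _ = ∫ _ω : Ω, Real.exp (-1) := by simp
      _ ≤ I := integral_mono (integrable_const _) int_exp hlow
  have hIlt : I < 1 := by
    have hVle : (∫ ω, (X ω - x) ^ 2) ≤ B ^ 2 := by
      have int_sq' : Integrable (fun ω => (X ω - x) ^ 2) :=
        aux_integrable hm hf (g := fun r => (r - x) ^ 2) (by fun_prop)
      calc (∫ ω, (X ω - x) ^ 2) ≤ ∫ _ω : Ω, B ^ 2 := by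
            apply integral_mono int_sq' (integrable_const _)
            intro ω
            have h := hXB ω
            show (X ω - x) ^ 2 ≤ B ^ 2
            exact sq_le_sq' (by linarith [neg_abs_le (X ω - x)]) ((le_abs_self _).trans h)
        _ = B ^ 2 := by simp
    have hIle : I ≤ 1 + η * δ + η ^ 2 * B ^ 2 := by
      have h1 : I ≤ ∫ ω, (1 + η * (X ω - x) + η ^ 2 * (X ω - x) ^ 2) :=
        integral_mono int_exp int_quad hpt
      have eXx : (∫ ω, (X ω - x)) = μ - x := by
        rw [integral_sub int_X (integrable_const _)]
        simp [hμ]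
      have int_lin2 : Integrable (fun ω => η * (X ω - x)) :=
        aux_integrable hm hf (g := fun r => η * (r - x)) (by fun_prop)
      have eXx' : (∫ ω, η * (X ω - x)) = η * δ := by
        rw [integral_const_mul, eXx, hδ]
      have e1 : (∫ ω, (1 + η * (X ω - x))) = 1 + η * δ := by
        rw [integral_add (integrable_const 1) int_lin2, eXx']
        simp
      have e2 : (∫ ω, η ^ 2 * (X ω - x) ^ 2) = η ^ 2 * ∫ ω, (X ω - x) ^ 2 :=
        integral_const_mul _ _
      have h2 : (∫ ω, (1 + η * (X ω - x) + η ^ 2 * (X ω - x) ^ 2)) =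
          1 + η * δ + η ^ 2 * ∫ ω, (X ω - x) ^ 2 := by
        rw [integral_add int_lin int_sq, e1, e2]
      rw [h2] at h1
      have h3 : η ^ 2 * (∫ ω, (X ω - x) ^ 2) ≤ η ^ 2 * B ^ 2 := by
        apply mul_le_mul_of_nonneg_left hVle (sq_nonneg _)
      linarith
    have hm2 : m * (B ^ 2 * m) ≤ m * (δ / 2) := by
      apply mul_le_mul_of_nonneg_left _ hmpos.le
      calc B ^ 2 * m ≤ B ^ 2 * (δ / (2 * B ^ 2)) := by
            apply mul_le_mul_of_nonneg_left (min_le_right _ _) (by positivity)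
        _ = δ / 2 := by field_simp
    have : 1 + η * δ + η ^ 2 * B ^ 2 ≤ 1 - m * δ / 2 := by
      rw [hη]
      nlinarith
    have hfin : 0 < m * δ / 2 := by positivity
    have := hIle.trans this
    linarith
  have hlogI : Real.log I < 0 := Real.log_neg hIpos hIlt
  have hkey : (∫ ω, Real.exp (η * X ω)) = Real.exp (η * x) * I := by
    rw [hI, ← integral_const_mul]
    congr 1
    funext ω
    rw [← Real.exp_add]
    ring_nf
  have hval : η * x - Real.log (∫ ω, Real.exp (η * X ω)) = -Real.log I := by
    rw [hkey, Real.log_mul (Real.exp_ne_zero _) hIpos.ne', Real.log_exp]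
    ring
  calc (0:ENNReal) < ENNReal.ofReal (η * x - Real.log (∫ ω, Real.exp (η * X ω))) := by
        rw [hval]
        simp only [ENNReal.ofReal_pos]
        linarith
    _ ≤ cramerRate X x := le_iSup (fun η : ℝ => ENNReal.ofReal
        (η * x - Real.log (∫ ω, Real.exp (η * X ω)))) η

end Aux

/-- If `D_S` is nonempty then `f^S` attains its infimum over `D_S`. -/
theorem stmt14 {Ω : Type*} [MeasureSpace Ω] [IsProbabilityMeasure (volume : Measure Ω)]
    {N : ℕ} (hN : 0 < N) (X : Fin N → Ω → ℝ)
    (hmeas : ∀ i, Measurable (X i)) (hfin : ∀ i, (Set.range (X i)).Finite)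
    (hpos : ∀ i ω, 0 < X i ω)
    (Rmin : Fin N → ℝ) (hRmin : ∀ i, IsLeast (Set.range (X i)) (Rmin i))
    (lam : Fin N → ℝ) (hlam : ∀ i, 0 < lam i)
    (hstab : ∑ i, lam i / (∫ ω, X i ω) < 1)
    (S : Finset (Fin N)) (hS : S.Nonempty)
    (hDS : (DS S Rmin (fun i => ∫ ω, X i ω) lam).Nonempty) :
    ∃ phihat ∈ DS S Rmin (fun i => ∫ ω, X i ω) lam,
      ∀ φ ∈ DS S Rmin (fun i => ∫ ω, X i ω) lam,
        fS X S lam phihat ≤ fS X S lam φ := by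
  classical
  set μv : Fin N → ℝ := fun i => ∫ ω, X i ω with hμv
  have hint : ∀ i, Integrable (X i) := fun i => by
    simpa using aux_integrable (hmeas i) (hfin i) (g := fun r => r) measurable_id
  have hRpos : ∀ i, 0 < Rmin i := by
    intro i
    obtain ⟨ω, hω⟩ := (hRmin i).1
    exact hω ▸ hpos i ω
  have hRle : ∀ i ω, Rmin i ≤ X i ω := fun i ω => (hRmin i).2 ⟨ω, rfl⟩
  have hμR : ∀ i, Rmin i ≤ μv i := by
    intro i
    calc Rmin i = ∫ _ω : Ω, Rmin i := by simp
      _ ≤ ∫ ω, X i ω := integral_mono (integrable_const _) (hint i) (hRle i)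
  have hμpos : ∀ i, 0 < μv i := fun i => lt_of_lt_of_le (hRpos i) (hμR i)
  obtain ⟨φ₀, hφ₀⟩ := hDS
  -- continuity of wS at positive points
  have hwScont : ∀ φ : Fin N → ℝ, (∀ i ∈ S, 0 < φ i) → ContinuousAt (wS S lam) φ := by
    intro φ hφ
    have hden : 0 < ∑ i ∈ S, (φ i)⁻¹ :=
      Finset.sum_pos (fun i hi => inv_pos.2 (hφ i hi)) hS
    show ContinuousAt
      (fun z : Fin N → ℝ => ((∑ i ∈ S, lam i / z i) - 1) / (∑ i ∈ S, (z i)⁻¹)) φ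
    apply ContinuousAt.div
    · exact ContinuousAt.sub
        (tendsto_finset_sum S fun i hi =>
          (continuousAt_const.div ((continuous_apply i).continuousAt) (hφ i hi).ne'))
        continuousAt_const
    · exact tendsto_finset_sum S fun i hi =>
        ((continuous_apply i).continuousAt.inv₀ (hφ i hi).ne')
    · exact hden.ne'
  -- basic facts about `DS`
  have hDSw : ∀ φ ∈ DS S Rmin μv lam,
      0 < wS S lam φ ∧ ∀ i ∈ S, wS S lam φ ≤ lam i := by
    rintro φ ⟨hb, c, w, hc0, hcsum, hwpos, hceq⟩
    have hφpos : ∀ i ∈ S, 0 < φ i := fun i hi => lt_of_lt_of_le (hRpos i) (hb i hi).1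
    have hden : 0 < ∑ i ∈ S, (φ i)⁻¹ :=
      Finset.sum_pos (fun i hi => inv_pos.2 (hφpos i hi)) hS
    have hkey : (∑ i ∈ S, lam i / φ i) - 1 = w * ∑ i ∈ S, (φ i)⁻¹ := by
      have hterm : ∀ i ∈ S, lam i / φ i - c i = w * (φ i)⁻¹ := by
        intro i hi
        have h := hceq i hi
        have hne := (hφpos i hi).ne'
        field_simp
        linarith
      calc (∑ i ∈ S, lam i / φ i) - 1 = ∑ i ∈ S, (lam i / φ i - c i) := by
            rw [Finset.sum_sub_distrib, hcsum]
        _ = ∑ i ∈ S, w * (φ i)⁻¹ := Finset.sum_congr rfl hterm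
        _ = w * ∑ i ∈ S, (φ i)⁻¹ := by rw [Finset.mul_sum]
    have hw_eq : wS S lam φ = w := by
      rw [wS, hkey, mul_div_assoc, div_self hden.ne', mul_one]
    constructor
    · rw [hw_eq]; exact hwpos
    · intro i hi
      rw [hw_eq]
      have h := hceq i hi
      nlinarith [mul_nonneg (hc0 i hi) (hφpos i hi).le]
  -- the compact set `K`
  set C : Set (Fin N → ℝ) :=
    Set.pi Set.univ (fun i => if i ∈ S then Set.Icc (Rmin i) (μv i) else {φ₀ i}) with hCdef
  have hCmem : ∀ φ : Fin N → ℝ, φ ∈ C ↔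
      ((∀ i ∈ S, Rmin i ≤ φ i ∧ φ i ≤ μv i) ∧ ∀ i ∉ S, φ i = φ₀ i) := by
    intro φ
    rw [hCdef, Set.mem_univ_pi]
    constructor
    · intro h
      constructor
      · intro i hi
        have := h i
        rw [if_pos hi] at this
        exact this
      · intro i hi
        have := h i
        rwa [if_neg hi] at this
    · rintro ⟨h1, h2⟩ i
      by_cases hi : i ∈ S
      · rw [if_pos hi]; exact h1 i hi
      · rw [if_neg hi]; exact h2 i hi
  have hCpos : ∀ φ ∈ C, ∀ i ∈ S, 0 < φ i := by
    intro φ hφ i hi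
    exact lt_of_lt_of_le (hRpos i) (((hCmem φ).1 hφ).1 i hi).1
  have hCcomp : IsCompact C := by
    rw [hCdef]
    apply isCompact_univ_pi
    intro i
    by_cases hi : i ∈ S
    · rw [if_pos hi]; exact isCompact_Icc
    · rw [if_neg hi]; exact isCompact_singleton
  have hCclosed : IsClosed C := by
    rw [hCdef]
    apply isClosed_set_pi
    intro i _
    by_cases hi : i ∈ S
    · rw [if_pos hi]; exact isClosed_Icc
    · rw [if_neg hi]; exact isClosed_singleton
  set L : ℝ := S.inf' hS lam with hLdef
  set K : Set (Fin N → ℝ) := C ∩ (wS S lam) ⁻¹' (Set.Icc 0 L) with hKdef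
  have hwKcont : ContinuousOn (wS S lam) C := fun φ hφ =>
    (hwScont φ (hCpos φ hφ)).continuousWithinAt
  have hKclosed : IsClosed K :=
    hwKcont.preimage_isClosed_of_isClosed hCclosed isClosed_Icc
  have hKcomp : IsCompact K := hCcomp.of_isClosed_subset hKclosed Set.inter_subset_left
  have hKfacts : ∀ φ ∈ K, (∀ i ∈ S, Rmin i ≤ φ i ∧ φ i ≤ μv i) ∧
      (0 ≤ wS S lam φ ∧ ∀ i ∈ S, wS S lam φ ≤ lam i) := by
    rintro φ ⟨hφC, hφw⟩
    refine ⟨((hCmem φ).1 hφC).1, hφw.1, fun i hi => hφw.2.trans ?_⟩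
    exact Finset.inf'_le lam hi
  have hKpos : ∀ φ ∈ K, ∀ i ∈ S, 0 < φ i := fun φ hφ => hCpos φ hφ.1
  -- the restriction map r
  set r : (Fin N → ℝ) → (Fin N → ℝ) := fun φ i => if i ∈ S then φ i else φ₀ i with hrdef
  have hrS : ∀ φ, ∀ i ∈ S, r φ i = φ i := by
    intro φ i hi
    rw [hrdef]
    exact if_pos hi
  have hw_r : ∀ φ, wS S lam (r φ) = wS S lam φ := by
    intro φ
    have h1 : (∑ i ∈ S, lam i / r φ i) = ∑ i ∈ S, lam i / φ i :=
      Finset.sum_congr rfl fun i hi => by rw [hrS φ i hi]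
    have h2 : (∑ i ∈ S, (r φ i)⁻¹) = ∑ i ∈ S, (φ i)⁻¹ :=
      Finset.sum_congr rfl fun i hi => by rw [hrS φ i hi]
    rw [wS, wS, h1, h2]
  have hfS_r : ∀ φ, fS X S lam (r φ) = fS X S lam φ := by
    intro φ
    rw [fS, fS, hw_r]
    congr 1
    exact Finset.sum_congr rfl fun i hi => by rw [hrS φ i hi]
  have hrK : ∀ φ ∈ DS S Rmin μv lam, r φ ∈ K := by
    intro φ hφ
    obtain ⟨hwpos, hwle⟩ := hDSw φ hφ
    constructor
    · rw [hCmem]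
      refine ⟨fun i hi => by rw [hrS φ i hi]; exact hφ.1 i hi, fun i hi => ?_⟩
      rw [hrdef]
      exact if_neg hi
    · rw [Set.mem_preimage, hw_r]
      refine ⟨hwpos.le, ?_⟩
      rw [hLdef]
      exact Finset.le_inf' hS lam hwle
  -- reformulation of fS on good points
  have hclaim : ∀ φ : Fin N → ℝ, (∀ i ∈ S, 0 < φ i) → (∀ i ∈ S, wS S lam φ ≤ lam i) →
      fS X S lam φ = ∑ i ∈ S, ⨆ η : ℝ, ENNReal.ofReal
        (((lam i - wS S lam φ) / φ i) * (η * φ i - Real.log (∫ ω, Real.exp (η * X i ω))))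
        / ENNReal.ofReal (wS S lam φ) := by
    intro φ hφ hle
    rw [fS]
    rw [div_eq_mul_inv, Finset.sum_mul]
    apply Finset.sum_congr rfl
    intro i hi
    have ha : 0 ≤ (lam i - wS S lam φ) / φ i :=
      div_nonneg (by linarith [hle i hi]) (hφ i hi).le
    rw [cramerRate, ENNReal.mul_iSup, ENNReal.iSup_mul]
    apply iSup_congr
    intro η
    rw [← ENNReal.ofReal_mul ha]
    exact (div_eq_mul_inv _ _).symm
  -- lower semicontinuity of fS on K
  have hlsc : LowerSemicontinuousOn (fS X S lam) K := by
    intro φ hφ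
    obtain ⟨hb, hw0, hwle⟩ := hKfacts φ hφ
    have hφpos : ∀ i ∈ S, 0 < φ i := hKpos φ hφ
    have hwcwa : ContinuousWithinAt (wS S lam) K φ :=
      (hwScont φ hφpos).continuousWithinAt
    have hg : LowerSemicontinuousWithinAt (fun z => ∑ i ∈ S, ⨆ η : ℝ, ENNReal.ofReal
        (((lam i - wS S lam z) / z i) * (η * z i - Real.log (∫ ω, Real.exp (η * X i ω))))
        / ENNReal.ofReal (wS S lam z)) K φ := by
      apply lowerSemicontinuousWithinAt_sum
      intro i hi
      apply aux_lsc_iSup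
      intro η
      apply aux_lsc_div
      · apply ContinuousWithinAt.mul
        · exact (continuousWithinAt_const.sub hwcwa).div
            ((continuous_apply i).continuousWithinAt) (hφpos i hi).ne'
        · exact (continuousWithinAt_const.mul
            ((continuous_apply i).continuousWithinAt)).sub continuousWithinAt_const
      · exact hwcwa
      · exact hw0
    intro y hy
    rw [hclaim φ hφpos hwle] at hy
    filter_upwards [hg y hy, self_mem_nhdsWithin] with z h1 h2
    rw [hclaim z (hKpos z h2) (hKfacts z h2).2.2]
    exact h1
  -- minimization
  obtain ⟨φs, hφsK, hmin⟩ := aux_min_attained hKcomp hKclosed ⟨r φ₀, hrK φ₀ hφ₀⟩ hlsc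
  by_cases htop : fS X S lam φs = ⊤
  · refine ⟨φ₀, hφ₀, fun φ hφ => ?_⟩
    have h1 : fS X S lam φ = ⊤ := by
      rw [← hfS_r φ]
      exact top_le_iff.1 (htop ▸ hmin (r φ) (hrK φ hφ))
    rw [h1]
    exact le_top
  · obtain ⟨hbs, hwge0, hwles⟩ := hKfacts φs hφsK
    have hφspos : ∀ i ∈ S, 0 < φs i := hKpos φs hφsK
    have hdens : 0 < ∑ i ∈ S, (φs i)⁻¹ :=
      Finset.sum_pos (fun i hi => inv_pos.2 (hφspos i hi)) hS
    have hwpos : 0 < wS S lam φs := by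
      rcases lt_or_eq_of_le hwge0 with h | heq
      · exact h
      · exfalso
        apply htop
        have hsum1 : ∑ i ∈ S, lam i / φs i = 1 := by
          have h0 : ((∑ i ∈ S, lam i / φs i) - 1) / (∑ i ∈ S, (φs i)⁻¹) = 0 := by
            rw [← wS]; exact heq.symm
          rcases div_eq_zero_iff.1 h0 with h1 | h1
          · linarith [sub_eq_zero.1 h1]
          · exact absurd h1 hdens.ne'
        obtain ⟨j, hjS, hjlt⟩ : ∃ j ∈ S, φs j < μv j := by
          by_contra h
          push_neg at h
          have h1 : ∀ j ∈ S, lam j / φs j ≤ lam j / μv j := by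
            intro j hj
            gcongr
            · exact (hlam j).le
            · exact hμpos j
            · exact h j hj
          have h2 : (1:ℝ) ≤ ∑ j ∈ S, lam j / μv j := hsum1 ▸ Finset.sum_le_sum h1
          have h3 : (∑ j ∈ S, lam j / μv j) ≤ ∑ j : Fin N, lam j / μv j :=
            Finset.sum_le_sum_of_subset_of_nonneg (Finset.subset_univ S)
              (fun j _ _ => div_nonneg (hlam j).le (hμpos j).le)
          rw [hμv] at h3
          linarith [hstab]
        rw [fS]
        have hw0 : ENNReal.ofReal (wS S lam φs) = 0 := by
          rw [← heq]; simp
        rw [hw0]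
        apply ENNReal.div_zero
        have hterm : 0 < ENNReal.ofReal ((lam j - wS S lam φs) / φs j) *
            cramerRate (X j) (φs j) := by
          apply ENNReal.mul_pos
          · rw [← heq]
            simp only [sub_zero, ne_eq, ENNReal.ofReal_eq_zero, not_le]
            exact div_pos (hlam j) (hφspos j hjS)
          · exact (aux_cramer_pos (hmeas j) (hfin j) hjlt).ne'
        refine ne_of_gt (lt_of_lt_of_le hterm ?_)
        exact Finset.single_le_sum (f := fun i => ENNReal.ofReal
          ((lam i - wS S lam φs) / φs i) * cramerRate (X i) (φs i))
          (fun i _ => zero_le') hjS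
    refine ⟨φs, ⟨hbs, fun i => if i ∈ S then (lam i - wS S lam φs) / φs i else 0,
      wS S lam φs, ?_, ?_, hwpos, ?_⟩, ?_⟩
    · intro i hi
      show (0:ℝ) ≤ if i ∈ S then (lam i - wS S lam φs) / φs i else 0
      rw [if_pos hi]
      exact div_nonneg (by linarith [hwles i hi]) (hφspos i hi).le
    · have hmul : wS S lam φs * (∑ i ∈ S, (φs i)⁻¹) = (∑ i ∈ S, lam i / φs i) - 1 := by
        rw [wS, div_mul_cancel₀ _ hdens.ne']
      calc (∑ i ∈ S, if i ∈ S then (lam i - wS S lam φs) / φs i else 0)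
          = ∑ i ∈ S, (lam i / φs i - wS S lam φs * (φs i)⁻¹) := by
            apply Finset.sum_congr rfl
            intro i hi
            rw [if_pos hi, sub_div, div_eq_mul_inv (wS S lam φs)]
        _ = (∑ i ∈ S, lam i / φs i) - wS S lam φs * ∑ i ∈ S, (φs i)⁻¹ := by
            rw [Finset.sum_sub_distrib, Finset.mul_sum]
        _ = 1 := by rw [hmul]; ring
    · intro i hi
      show lam i - (if i ∈ S then (lam i - wS S lam φs) / φs i else 0) * φs i = wS S lam φs
      rw [if_pos hi, div_mul_cancel₀ _ (hφspos i hi).ne']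
      ring
    · intro φ hφ
      rw [← hfS_r φ]
      exact hmin (r φ) (hrK φ hφ)
end
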